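/- arXiv:1607.02134 — 2 statements merged into one kernel-verified Lean document; each statement's English description precedes it below -/
import Mathlib

section
/- (Replica symmetric fixed point relations) If the unique minimizer of P over Borel probability measures on [0,1] is the Dirac mass δ_q for some q ∈ [0,1), then q satisfies the fixed point equation q = (ξ'(q) + h²)(1−q)² and the replicon inequality ξ''(q)(1−q)² ≤ 1. -/
open MeasureTheory Set Filter
open scoped ENNReal NNReal Topology

noncomputable section

/-- The mixed p-spin model `ξ(t) = Σ_p γ_p t^p`. -/
def xi (γ : ℕ → ℝ) (t : ℝ) : ℝ := ∑' p, γ p * t ^ p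

/-- Admissible model coefficients: `γ_p ≥ 0`, supported on `p ≥ 2`, not all zero,
and `ξ(1+ε) < ∞` for some `ε > 0`. -/
def ModelCoeffs (γ : ℕ → ℝ) : Prop :=
  (∀ p, 0 ≤ γ p) ∧ γ 0 = 0 ∧ γ 1 = 0 ∧ (∃ p, 0 < γ p) ∧
    ∃ ε > (0:ℝ), Summable fun p => γ p * (1 + ε) ^ p

/-- Borel probability measures on `[0,1]`. -/
def ProbOn01 (μ : Measure ℝ) : Prop :=
  IsProbabilityMeasure μ ∧ μ (Icc (0:ℝ) 1)ᶜ = 0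

/-- `φ_μ(t) = ∫_t^1 μ([0,s]) ds`. -/
def phi (μ : Measure ℝ) (t : ℝ) : ℝ := ∫ s in t..1, (μ (Icc (0:ℝ) s)).toReal

/-- The Crisanti–Sommers functional, with value `+∞` allowed. -/
def CS (γ : ℕ → ℝ) (h : ℝ) (μ : Measure ℝ) : EReal :=
  ((1/2 : ℝ) : EReal) *
    ( (((∫ s in Ioo (0:ℝ) 1, iteratedDeriv 2 (xi γ) s * phi μ s) : ℝ) : EReal)
      + ((∫⁻ s in Ioo (0:ℝ) 1, ENNReal.ofReal (1 / phi μ s - 1 / (1 - s))) : EReal)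
      + (((h ^ 2 * phi μ 0 : ℝ)) : EReal) )

/-- First derivative on `[0,1)`. -/
def d1 (η : ℝ → ℝ) : ℝ → ℝ := derivWithin η (Ico 0 1)
/-- Second derivative on `[0,1)` (defined a.e. for `η ∈ X`). -/
def d2 (η : ℝ → ℝ) : ℝ → ℝ := derivWithin (d1 η) (Ico 0 1)
/-- Third derivative on `[0,1)`. -/
def d3 (η : ℝ → ℝ) : ℝ → ℝ := derivWithin (d2 η) (Ico 0 1)

/-- `η ∈ X`: `η` is `C¹` on `[0,1)` with locally Lipschitz derivative. -/
def MemX (η : ℝ → ℝ) : Prop :=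
  (∀ s ∈ Ico (0:ℝ) 1, HasDerivWithinAt η (d1 η s) (Ico 0 1) s) ∧
  ContinuousOn (d1 η) (Ico (0:ℝ) 1) ∧
  ∀ b ∈ Ico (0:ℝ) 1, ∃ K : ℝ≥0, LipschitzOnWith K (d1 η) (Icc 0 b)

/-- `η ∈ Λ`: `η ∈ X`, `η ≥ ξ` on `[0,1)`, `η'(0) = -h²`, `η'' ≥ 0` a.e. -/
def MemLambda (γ : ℕ → ℝ) (h : ℝ) (η : ℝ → ℝ) : Prop :=
  MemX η ∧ (∀ s ∈ Ico (0:ℝ) 1, xi γ s ≤ η s) ∧ d1 η 0 = -h ^ 2 ∧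
    ∀ᵐ s ∂(volume.restrict (Ico (0:ℝ) 1)), 0 ≤ d2 η s

/-- The dual functional, with values in `[-∞,∞)`. -/
def Dual (γ : ℕ → ℝ) (h : ℝ) (η : ℝ → ℝ) : EReal :=
  ((1/2 : ℝ) : EReal) *
    ( -((∫⁻ s in Ioo (0:ℝ) 1,
          ENNReal.ofReal (d2 η s * (1 - s) + 1 / (1 - s) - 2 * Real.sqrt (d2 η s))) : EReal)
      + (((-η 0 + h ^ 2 + xi γ 1 : ℝ)) : EReal) )

/-- `μ` minimizes the Crisanti–Sommers functional over probability measures on `[0,1]`. -/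
def Minimizes (γ : ℕ → ℝ) (h : ℝ) (μ : Measure ℝ) : Prop :=
  ProbOn01 μ ∧ ∀ ν, ProbOn01 ν → CS γ h μ ≤ CS γ h ν

/-- `η` maximizes the dual functional over `Λ`. -/
def Maximizes (γ : ℕ → ℝ) (h : ℝ) (η : ℝ → ℝ) : Prop :=
  MemLambda γ h η ∧ ∀ ζ, MemLambda γ h ζ → Dual γ h ζ ≤ Dual γ h η

/-- `𝔡 = (1/√(ξ''))''`. -/
def frakd (γ : ℕ → ℝ) : ℝ → ℝ :=
  deriv (deriv (fun t => 1 / Real.sqrt (iteratedDeriv 2 (xi γ) t)))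

def xi1 (γ : ℕ → ℝ) (t : ℝ) : ℝ := ∑' p, γ p * ((p : ℝ) * t ^ (p - 1))

def xi2 (γ : ℕ → ℝ) (t : ℝ) : ℝ :=
  ∑' p, γ p * ((p : ℝ) * (((p - 1 : ℕ) : ℝ) * t ^ (p - 1 - 1)))

lemma cube_bound (p : ℕ) (a b : ℝ) (hb : 0 ≤ b) (hap : a ≤ (p:ℝ)) (hbp : b ≤ (p:ℝ)) :
    (p:ℝ) * (a * b) ≤ (p:ℝ)^3 := by
  have hp0 : (0:ℝ) ≤ p := Nat.cast_nonneg p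
  have h1 : a * b ≤ (p:ℝ) * (p:ℝ) := mul_le_mul hap hbp hb hp0
  calc (p:ℝ) * (a*b) ≤ (p:ℝ)*((p:ℝ)*(p:ℝ)) := mul_le_mul_of_nonneg_left h1 hp0
  _ = (p:ℝ)^3 := by ring

lemma xi_smooth (γ : ℕ → ℝ) (hγ : ModelCoeffs γ) :
    ∃ R : ℝ, 1 < R ∧
      (∀ t ∈ Ioo (-R) R, HasDerivAt (xi γ) (xi1 γ t) t) ∧
      (∀ t ∈ Ioo (-R) R, HasDerivAt (xi1 γ) (xi2 γ t) t) ∧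
      (∀ t ∈ Ioo (-R) R, ContinuousAt (xi2 γ) t) := by
  obtain ⟨hγ0, hγ00, hγ1, -, ε, hε, hsum⟩ := hγ
  set R : ℝ := 1 + ε / 2 with hRdef
  have hR1 : (1:ℝ) < R := by simp [hRdef]; linarith
  have hR0 : (0:ℝ) < R := by linarith
  have hRε : R < 1 + ε := by simp [hRdef]; linarith
  have h1ε : (0:ℝ) < 1 + ε := by linarith
  set r : ℝ := R / (1 + ε) with hrdef
  have hr0 : 0 ≤ r := by positivity
  have hr1 : r < 1 := by rw [hrdef, div_lt_one h1ε]; exact hRε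
  obtain ⟨C, hC⟩ := (tendsto_pow_const_mul_const_pow_of_lt_one 3 hr0 hr1).bddAbove_range
  have hCb : ∀ p : ℕ, (p:ℝ)^3 * r ^ p ≤ C := fun p => hC ⟨p, rfl⟩
  have hu : Summable (fun p => γ p * (p:ℝ)^3 * R ^ p) := by
    refine Summable.of_nonneg_of_le
      (fun p => mul_nonneg (mul_nonneg (hγ0 p) (by positivity)) (pow_nonneg hR0.le p))
      (fun p => ?_) (hsum.mul_left C)
    have hne : (1+ε)^p ≠ 0 := pow_ne_zero _ (by linarith)
    have h1 : γ p * (p:ℝ)^3 * R ^ p = ((p:ℝ)^3 * r ^ p) * (γ p * (1+ε)^p) := by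
      rw [hrdef, div_pow]
      field_simp
    rw [h1]
    exact mul_le_mul_of_nonneg_right (hCb p) (mul_nonneg (hγ0 p) (pow_nonneg h1ε.le p))
  -- generic helper: |y|^e ≤ R^p for e ≤ p
  have hpow : ∀ (y : ℝ), |y| ≤ R → ∀ (e p : ℕ), e ≤ p → |y| ^ e ≤ R ^ p := by
    intro y hy e p hep
    calc |y| ^ e ≤ R ^ e := pow_le_pow_left₀ (abs_nonneg y) hy e
    _ ≤ R ^ p := pow_le_pow_right₀ (le_of_lt hR1) hep
  have hmemy : ∀ y ∈ Ioo (-R) R, |y| ≤ R := by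
    intro y hy; rw [abs_le]; exact ⟨hy.1.le, hy.2.le⟩
  -- bounds
  have hb1 : ∀ (p : ℕ) (y : ℝ), y ∈ Ioo (-R) R →
      ‖γ p * ((p:ℝ) * y ^ (p-1))‖ ≤ γ p * (p:ℝ)^3 * R ^ p := by
    intro p y hy
    have h3 : (p:ℝ) ≤ (p:ℝ)^3 := by
      rcases Nat.eq_zero_or_pos p with h | h
      · simp [h]
      · have h1 : (1:ℝ) ≤ (p:ℝ) := by exact_mod_cast h
        have := cube_bound p 1 1 zero_le_one h1 h1
        linarith
    simp only [norm_mul, Real.norm_eq_abs, abs_of_nonneg (hγ0 p), Nat.abs_cast]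
    calc γ p * ((p:ℝ) * |y ^ (p-1)|) ≤ γ p * ((p:ℝ)^3 * R ^ p) := by
          apply mul_le_mul_of_nonneg_left _ (hγ0 p)
          apply mul_le_mul h3 _ (abs_nonneg _) (by positivity)
          rw [abs_pow]
          exact hpow y (hmemy y hy) _ p (Nat.sub_le p 1)
    _ = γ p * (p:ℝ)^3 * R ^ p := by ring
  have hb2 : ∀ (p : ℕ) (y : ℝ), y ∈ Ioo (-R) R →
      ‖γ p * ((p:ℝ) * (((p-1:ℕ):ℝ) * y ^ (p-1-1)))‖ ≤ γ p * (p:ℝ)^3 * R ^ p := by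
    intro p y hy
    have hc1 : ((p-1:ℕ):ℝ) ≤ (p:ℝ) := by exact_mod_cast Nat.sub_le p 1
    have h3 : (p:ℝ) * ((p-1:ℕ):ℝ) ≤ (p:ℝ)^3 := by
      rcases Nat.eq_zero_or_pos p with h | h
      · simp [h]
      · have h1 : (1:ℝ) ≤ (p:ℝ) := by exact_mod_cast h
        have := cube_bound p ((p-1:ℕ):ℝ) 1 zero_le_one hc1 h1
        linarith
    simp only [norm_mul, Real.norm_eq_abs, abs_of_nonneg (hγ0 p), Nat.abs_cast]
    calc γ p * ((p:ℝ) * (((p-1:ℕ):ℝ) * |y ^ (p-1-1)|))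
        ≤ γ p * ((p:ℝ)^3 * R ^ p) := by
          apply mul_le_mul_of_nonneg_left _ (hγ0 p)
          have he : |y ^ (p-1-1)| ≤ R ^ p := by
            rw [abs_pow]; exact hpow y (hmemy y hy) _ p (by omega)
          calc (p:ℝ) * (((p-1:ℕ):ℝ) * |y ^ (p-1-1)|)
              = ((p:ℝ) * ((p-1:ℕ):ℝ)) * |y ^ (p-1-1)| := by ring
          _ ≤ (p:ℝ)^3 * R^p := mul_le_mul h3 he (abs_nonneg _) (by positivity)
    _ = γ p * (p:ℝ)^3 * R ^ p := by ring
  have hopen : IsOpen (Ioo (-R) R) := isOpen_Ioo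
  have hconn : IsPreconnected (Ioo (-R) R) := isPreconnected_Ioo
  have h0mem : (0:ℝ) ∈ Ioo (-R) R := by constructor <;> [linarith; linarith]
  have hd1 : ∀ (p : ℕ) (y : ℝ), y ∈ Ioo (-R) R →
      HasDerivAt (fun t => γ p * t ^ p) (γ p * ((p:ℝ) * y ^ (p-1))) y :=
    fun p y _ => (hasDerivAt_pow p y).const_mul (γ p)
  have hd2 : ∀ (p : ℕ) (y : ℝ), y ∈ Ioo (-R) R →
      HasDerivAt (fun t => γ p * ((p:ℝ) * t ^ (p-1)))
        (γ p * ((p:ℝ) * (((p-1:ℕ):ℝ) * y ^ (p-1-1)))) y :=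
    fun p y _ => ((hasDerivAt_pow (p-1) y).const_mul (p:ℝ)).const_mul (γ p)
  have hsum0 : Summable (fun p => γ p * (0:ℝ) ^ p) := by
    apply summable_of_ne_finset_zero (s := Finset.range 1)
    intro p hp
    have : 1 ≤ p := by by_contra hlt; exact hp (Finset.mem_range.2 (by omega))
    simp [zero_pow (by omega : p ≠ 0)]
  have hsum1 : Summable (fun p => γ p * ((p:ℝ) * (0:ℝ) ^ (p-1))) := by
    apply summable_of_ne_finset_zero (s := Finset.range 2)
    intro p hp
    have : 2 ≤ p := by by_contra hlt; exact hp (Finset.mem_range.2 (by omega))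
    simp [zero_pow (by omega : p - 1 ≠ 0)]
  refine ⟨R, hR1, ?_, ?_, ?_⟩
  · intro t ht
    exact hasDerivAt_tsum_of_isPreconnected hu hopen hconn hd1 hb1 h0mem hsum0 ht
  · intro t ht
    exact hasDerivAt_tsum_of_isPreconnected hu hopen hconn hd2 hb2 h0mem hsum1 ht
  · -- continuity of xi2 via a third differentiation
    intro t ht
    have hd3 : ∀ (p : ℕ) (y : ℝ), y ∈ Ioo (-R) R →
        HasDerivAt (fun t => γ p * ((p:ℝ) * (((p-1:ℕ):ℝ) * t ^ (p-1-1))))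
          (γ p * ((p:ℝ) * (((p-1:ℕ):ℝ) * (((p-1-1:ℕ):ℝ) * y ^ (p-1-1-1))))) y :=
      fun p y _ =>
        (((hasDerivAt_pow (p-1-1) y).const_mul ((p-1:ℕ):ℝ)).const_mul (p:ℝ)).const_mul (γ p)
    have hb3 : ∀ (p : ℕ) (y : ℝ), y ∈ Ioo (-R) R →
        ‖γ p * ((p:ℝ) * (((p-1:ℕ):ℝ) * (((p-1-1:ℕ):ℝ) * y ^ (p-1-1-1))))‖ ≤ γ p * (p:ℝ)^3 * R ^ p := by
      intro p y hy
      have hc1 : ((p-1:ℕ):ℝ) ≤ (p:ℝ) := by exact_mod_cast Nat.sub_le p 1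
      have hc2 : ((p-1-1:ℕ):ℝ) ≤ (p:ℝ) := by exact_mod_cast le_trans (Nat.sub_le _ 1) (Nat.sub_le p 1)
      have h3 : (p:ℝ) * (((p-1:ℕ):ℝ) * ((p-1-1:ℕ):ℝ)) ≤ (p:ℝ)^3 :=
        cube_bound p _ _ (Nat.cast_nonneg _) hc1 hc2
      simp only [norm_mul, Real.norm_eq_abs, abs_of_nonneg (hγ0 p), Nat.abs_cast]
      calc γ p * ((p:ℝ) * (((p-1:ℕ):ℝ) * (((p-1-1:ℕ):ℝ) * |y ^ (p-1-1-1)|)))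
          ≤ γ p * ((p:ℝ)^3 * R ^ p) := by
            apply mul_le_mul_of_nonneg_left _ (hγ0 p)
            have he : |y ^ (p-1-1-1)| ≤ R ^ p := by
              rw [abs_pow]; exact hpow y (hmemy y hy) _ p (by omega)
            calc (p:ℝ) * (((p-1:ℕ):ℝ) * (((p-1-1:ℕ):ℝ) * |y ^ (p-1-1-1)|))
                = ((p:ℝ) * (((p-1:ℕ):ℝ) * ((p-1-1:ℕ):ℝ))) * |y ^ (p-1-1-1)| := by ring
            _ ≤ (p:ℝ)^3 * R^p := mul_le_mul h3 he (abs_nonneg _) (by positivity)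
      _ = γ p * (p:ℝ)^3 * R ^ p := by ring
    have hsum2 : Summable (fun p => γ p * ((p:ℝ) * (((p-1:ℕ):ℝ) * (0:ℝ) ^ (p-1-1)))) := by
      apply summable_of_ne_finset_zero (s := Finset.range 3)
      intro p hp
      have : 3 ≤ p := by by_contra hlt; exact hp (Finset.mem_range.2 (by omega))
      simp [zero_pow (by omega : p - 1 - 1 ≠ 0)]
    exact (hasDerivAt_tsum_of_isPreconnected hu hopen hconn hd3 hb3 h0mem hsum2 ht).continuousAt

lemma xi_zero {γ : ℕ → ℝ} (hγ00 : γ 0 = 0) : xi γ 0 = 0 := by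
  unfold xi
  convert tsum_zero with p
  rcases Nat.eq_zero_or_pos p with h | h
  · simp [h, hγ00]
  · simp [zero_pow (by omega : p ≠ 0)]

lemma xi1_zero {γ : ℕ → ℝ} (hγ1 : γ 1 = 0) : xi1 γ 0 = 0 := by
  unfold xi1
  convert tsum_zero with p
  match p with
  | 0 => simp
  | 1 => simp [hγ1]
  | (n+2) => simp [zero_pow (by omega : n + 2 - 1 ≠ 0)]

lemma xi1_nonneg {γ : ℕ → ℝ} (hγ0 : ∀ p, 0 ≤ γ p) {t : ℝ} (ht : 0 ≤ t) : 0 ≤ xi1 γ t :=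
  tsum_nonneg (fun p => mul_nonneg (hγ0 p)
    (mul_nonneg (Nat.cast_nonneg p) (pow_nonneg ht _)))

/-- the two-atom measure -/
def nu (a b : ℝ) : Measure ℝ :=
  (2⁻¹ : ℝ≥0∞) • Measure.dirac a + (2⁻¹ : ℝ≥0∞) • Measure.dirac b

lemma dirac_eq_nu (q : ℝ) : Measure.dirac q = nu q q := by
  unfold nu
  ext s hs
  simp only [Measure.add_apply, Measure.smul_apply, smul_eq_mul]
  rw [← add_mul, ENNReal.inv_two_add_inv_two, one_mul]

lemma nu_Icc (a b s : ℝ) (ha : 0 ≤ a) (hb : 0 ≤ b) :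
    ((nu a b) (Icc 0 s)).toReal =
      (if a ≤ s then (2⁻¹:ℝ) else 0) + (if b ≤ s then (2⁻¹:ℝ) else 0) := by
  rw [nu, Measure.add_apply, Measure.smul_apply, Measure.smul_apply, smul_eq_mul, smul_eq_mul,
    Measure.dirac_apply' _ measurableSet_Icc, Measure.dirac_apply' _ measurableSet_Icc]
  simp only [indicator_apply, mem_Icc, ha, true_and, hb, Pi.one_apply]
  split_ifs <;>
    simp [ENNReal.inv_two_add_inv_two, ENNReal.toReal_inv] <;> norm_num

lemma stepIntegrable (r : ℝ) (x y : ℝ) :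
    IntervalIntegrable (fun s => if r ≤ s then (1:ℝ) else 0) volume x y := by
  apply Monotone.intervalIntegrable
  intro u v huv
  by_cases h : r ≤ u
  · simp [h, h.trans huv]
  · by_cases h' : r ≤ v <;> simp [h, h']

lemma stepInt (r t : ℝ) (hr1 : r ≤ 1) (ht1 : t ≤ 1) :
    ∫ s in t..1, (if r ≤ s then (1:ℝ) else 0) = 1 - max r t := by
  rcases le_or_gt r t with h | h
  · rw [max_eq_right h]
    rw [intervalIntegral.integral_congr (g := fun _ => (1:ℝ))
      (fun s hs => by
        rw [uIcc_of_le ht1] at hs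
        exact if_pos (h.trans hs.1))]
    simp
  · rw [max_eq_left h.le]
    rw [← intervalIntegral.integral_add_adjacent_intervals (b := r)
      (stepIntegrable r t r) (stepIntegrable r r 1)]
    have hae : ∀ᵐ (x : ℝ), x ≠ r := by
      rw [ae_iff]
      convert Real.volume_singleton (a := r) using 2
      simp [setOf_eq_eq_singleton]
    have e1 : ∫ s in t..r, (if r ≤ s then (1:ℝ) else 0) = 0 := by
      rw [intervalIntegral.integral_congr_ae (g := fun _ => (0:ℝ))
        (hae.mono (fun x hx hmem => by
          rw [uIoc_of_le h.le] at hmem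
          exact if_neg (not_le.2 (lt_of_le_of_ne hmem.2 hx))))]
      simp
    have e2 : ∫ s in r..1, (if r ≤ s then (1:ℝ) else 0) = 1 - r := by
      rw [intervalIntegral.integral_congr (g := fun _ => (1:ℝ))
        (fun s hs => by
          rw [uIcc_of_le hr1] at hs
          exact if_pos hs.1)]
      simp
    rw [e1, e2, zero_add]

lemma half_if (c : Prop) [Decidable c] :
    (if c then (2⁻¹:ℝ) else 0) = 2⁻¹ * (if c then (1:ℝ) else 0) := by
  split_ifs <;> norm_num

lemma phi_nu (a b t : ℝ) (ha : 0 ≤ a) (ha1 : a ≤ 1) (hb : 0 ≤ b) (hb1 : b ≤ 1) (ht1 : t ≤ 1) :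
    phi (nu a b) t = 2⁻¹ * (1 - max a t) + 2⁻¹ * (1 - max b t) := by
  unfold phi
  rw [intervalIntegral.integral_congr
    (g := fun s => 2⁻¹ * (if a ≤ s then (1:ℝ) else 0) + 2⁻¹ * (if b ≤ s then (1:ℝ) else 0))
    (fun s _ => by rw [nu_Icc a b s ha hb, half_if, half_if])]
  rw [intervalIntegral.integral_add ((stepIntegrable a t 1).const_mul _)
    ((stepIntegrable b t 1).const_mul _), intervalIntegral.integral_const_mul,
    intervalIntegral.integral_const_mul, stepInt a t ha1 ht1, stepInt b t hb1 ht1]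

lemma probOn01_nu (a b : ℝ) (ha : 0 ≤ a) (ha1 : a ≤ 1) (hb : 0 ≤ b) (hb1 : b ≤ 1) :
    ProbOn01 (nu a b) := by
  constructor
  · constructor
    rw [nu, Measure.add_apply, Measure.smul_apply, Measure.smul_apply, smul_eq_mul, smul_eq_mul,
      Measure.dirac_apply' _ MeasurableSet.univ, Measure.dirac_apply' _ MeasurableSet.univ]
    simp [ENNReal.inv_two_add_inv_two]
  · rw [nu, Measure.add_apply, Measure.smul_apply, Measure.smul_apply, smul_eq_mul, smul_eq_mul,
      Measure.dirac_apply' _ measurableSet_Icc.compl, Measure.dirac_apply' _ measurableSet_Icc.compl]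
    simp [indicator_apply, mem_compl_iff, mem_Icc, ha, ha1, hb, hb1]

/-- value of the CS functional on two-atom measures -/
def Phi (γ : ℕ → ℝ) (h : ℝ) (a b : ℝ) : ℝ :=
  -(xi γ a)/2 - xi γ b/2 + a/(1-(a+b)/2) + 2*Real.log (1-(a+b)/2) - Real.log (1-b)
    + h^2*(1-(a+b)/2)

lemma CS_nu (γ : ℕ → ℝ) (h : ℝ) (hγ : ModelCoeffs γ) (a b : ℝ)
    (ha : 0 ≤ a) (hab : a ≤ b) (hb1 : b < 1) :
    CS γ h (nu a b) = (((1/2 : ℝ) * (xi γ 1 + Phi γ h a b) : ℝ) : EReal) := by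
  obtain ⟨R, hR1, hD1, hD2, hC2⟩ := xi_smooth γ hγ
  have ha1 : a < 1 := lt_of_le_of_lt hab hb1
  have hb0 : 0 ≤ b := ha.trans hab
  set c : ℝ := 1 - (a+b)/2 with hcdef
  have hc0 : 0 < c := by rw [hcdef]; nlinarith
  have hsub : Icc (0:ℝ) 1 ⊆ Ioo (-R) R := fun s hs =>
    ⟨by nlinarith [hs.1, hs.2], by nlinarith [hs.1, hs.2]⟩
  set Ψ : ℝ → ℝ := fun s => 2⁻¹ * (1 - max a s) + 2⁻¹ * (1 - max b s) with hΨdef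
  have hphiEq : ∀ s ∈ Icc (0:ℝ) 1, phi (nu a b) s = Ψ s := fun s hs =>
    phi_nu a b s ha ha1.le hb0 hb1.le hs.2
  have hIter : ∀ s ∈ Icc (0:ℝ) 1, iteratedDeriv 2 (xi γ) s = xi2 γ s := by
    intro s hs
    have h2 : iteratedDeriv 2 (xi γ) = deriv (deriv (xi γ)) := by
      rw [iteratedDeriv_succ, iteratedDeriv_one]
    rw [h2]
    have hev : deriv (xi γ) =ᶠ[𝓝 s] xi1 γ :=
      (isOpen_Ioo.eventually_mem (hsub hs)).mono (fun y hy => (hD1 y hy).deriv)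
    rw [hev.deriv_eq]
    exact (hD2 s (hsub hs)).deriv
  have hΨcont : Continuous Ψ := by
    apply Continuous.add <;>
      exact continuous_const.mul (continuous_const.sub (continuous_const.max continuous_id))
  have hcontg : ContinuousOn (fun s => xi2 γ s * Ψ s) (Icc (0:ℝ) 1) :=
    ContinuousOn.mul (fun s hs => (hC2 s (hsub hs)).continuousWithinAt) hΨcont.continuousOn
  have hIccab : Icc a b ⊆ Icc (0:ℝ) 1 := Icc_subset_Icc ha hb1.le
  have hIcc0a : Icc (0:ℝ) a ⊆ Icc (0:ℝ) 1 := Icc_subset_Icc le_rfl ha1.le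
  have hIccb1 : Icc b 1 ⊆ Icc (0:ℝ) 1 := Icc_subset_Icc hb0 le_rfl
  -- first integral
  have e1 : (∫ s in Ioo (0:ℝ) 1, iteratedDeriv 2 (xi γ) s * phi (nu a b) s)
      = xi γ 1 - xi γ a / 2 - xi γ b / 2 := by
    rw [setIntegral_congr_fun measurableSet_Ioo
      (g := fun s => xi2 γ s * Ψ s)
      (fun s hs => by
        rw [hIter s (Ioo_subset_Icc_self hs), hphiEq s (Ioo_subset_Icc_self hs)])]
    rw [← integral_Ioc_eq_integral_Ioo, ← intervalIntegral.integral_of_le zero_le_one]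
    have hint : ∀ x y : ℝ, Icc x y ⊆ Icc (0:ℝ) 1 → x ≤ y →
        IntervalIntegrable (fun s => xi2 γ s * Ψ s) volume x y := by
      intro x y hxy hle
      exact ((hcontg.mono (by rwa [uIcc_of_le hle])).intervalIntegrable)
    rw [← intervalIntegral.integral_add_adjacent_intervals (b := b)
        (hint 0 b (Icc_subset_Icc le_rfl hb1.le) hb0) (hint b 1 hIccb1 hb1.le),
      ← intervalIntegral.integral_add_adjacent_intervals (a := 0) (b := a) (c := b)
        (hint 0 a hIcc0a ha) (hint a b hIccab hab)]
    have p1 : ∫ s in (0:ℝ)..a, xi2 γ s * Ψ s = c * xi1 γ a - c * xi1 γ 0 := by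
      apply intervalIntegral.integral_eq_sub_of_hasDerivAt
        (f := fun s => c * xi1 γ s)
      · intro x hx
        rw [uIcc_of_le ha] at hx
        have hd := (hD2 x (hsub (hIcc0a hx))).const_mul c
        convert hd using 1
        show xi2 γ x * Ψ x = _
        rw [hΨdef]
        simp only
        rw [max_eq_left (hx.2 : x ≤ a), max_eq_left (hx.2.trans hab), hcdef]
        ring
        rfl
      · exact hint 0 a hIcc0a ha
    have p2 : ∫ s in a..b, xi2 γ s * Ψ s =
        (xi1 γ b * (1 - b/2 - b/2) + xi γ b / 2)
          - (xi1 γ a * (1 - a/2 - b/2) + xi γ a / 2) := by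
      apply intervalIntegral.integral_eq_sub_of_hasDerivAt
        (f := fun s => xi1 γ s * (1 - s/2 - b/2) + xi γ s / 2)
      · intro x hx
        rw [uIcc_of_le hab] at hx
        have hlin : HasDerivAt (fun y : ℝ => 1 - y/2 - b/2) (-(1/2)) x := by
          have := (((hasDerivAt_id x).div_const 2).const_sub 1).sub_const (b/2)
          simpa using this
        have hmem := hsub (hIccab hx)
        have hd := ((hD2 x hmem).mul hlin).add ((hD1 x hmem).div_const 2)
        convert hd using 1
        show xi2 γ x * Ψ x = _
        rw [hΨdef]
        simp only
        rw [max_eq_right (hx.1 : a ≤ x), max_eq_left (hx.2 : x ≤ b)]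
        ring
        rfl
      · exact hint a b hIccab hab
    have p3 : ∫ s in b..(1:ℝ), xi2 γ s * Ψ s =
        (xi1 γ 1 * (1 - 1) + xi γ 1) - (xi1 γ b * (1 - b) + xi γ b) := by
      apply intervalIntegral.integral_eq_sub_of_hasDerivAt
        (f := fun s => xi1 γ s * (1 - s) + xi γ s)
      · intro x hx
        rw [uIcc_of_le hb1.le] at hx
        have hlin : HasDerivAt (fun y : ℝ => 1 - y) (-1 : ℝ) x := by
          simpa using (hasDerivAt_id x).const_sub 1
        have hmem := hsub (hIccb1 hx)
        have hd := ((hD2 x hmem).mul hlin).add (hD1 x hmem)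
        convert hd using 1
        show xi2 γ x * Ψ x = _
        rw [hΨdef]
        simp only
        rw [max_eq_right ((hx.1 : b ≤ x).trans' hab), max_eq_right (hx.1 : b ≤ x)]
        ring
        rfl
      · exact hint b 1 hIccb1 hb1.le
    rw [p1, p2, p3, xi1_zero hγ.2.2.1, hcdef]
    ring
  -- second integral (lintegral)
  set ge : ℝ → ℝ := fun s => 1 / Ψ s - 1 / (1 - s) with hgedef
  have hΨpos : ∀ s ∈ Icc (0:ℝ) 1, s < 1 → 0 < Ψ s := by
    intro s hs hs1
    rw [hΨdef]
    simp only
    have h1 : max a s < 1 := max_lt ha1 hs1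
    have h2 : max b s < 1 := max_lt hb1 hs1
    nlinarith
  have hΨle : ∀ s : ℝ, Ψ s ≤ 1 - s := by
    intro s
    rw [hΨdef]
    simp only
    have h1 := le_max_right a s
    have h2 := le_max_right b s
    nlinarith
  have hgenn : ∀ s ∈ Ioo (0:ℝ) 1, 0 ≤ ge s := by
    intro s hs
    rw [hgedef]
    simp only
    have hp := hΨpos s (Ioo_subset_Icc_self hs) hs.2
    have := one_div_le_one_div_of_le hp (hΨle s)
    linarith
  have hwpos : ∀ s ∈ Icc (0:ℝ) b, 0 < Ψ s :=
    fun s hs => hΨpos s (Icc_subset_Icc le_rfl hb1.le hs) (lt_of_le_of_lt hs.2 hb1)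
  have hcontge : ContinuousOn ge (Icc (0:ℝ) b) := by
    apply ContinuousOn.sub
    · exact continuousOn_const.div hΨcont.continuousOn
        (fun s hs => ne_of_gt (hwpos s hs))
    · exact continuousOn_const.div (continuous_const.sub continuous_id).continuousOn
        (fun s hs => by
          have : s < 1 := lt_of_le_of_lt hs.2 hb1
          intro hcon; rw [sub_eq_zero] at hcon; linarith)
  have hgezero : ∀ s ∈ Icc b 1, ge s = 0 := by
    intro s hs
    rw [hgedef, hΨdef]
    simp only
    rw [max_eq_right (hab.trans hs.1), max_eq_right hs.1,
      show 2⁻¹ * (1-s) + 2⁻¹ * (1-s) = 1 - s by ring, sub_self]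
  have hgeint : IntegrableOn ge (Ioo (0:ℝ) 1) := by
    apply IntegrableOn.mono_set (t := Ioc (0:ℝ) b ∪ Ioo b 1)
    · apply IntegrableOn.union
      · exact (hcontge.integrableOn_Icc).mono_set Ioc_subset_Icc_self
      · exact (integrableOn_zero).congr_fun
          (fun s hs => (hgezero s (Ioo_subset_Icc_self hs)).symm) measurableSet_Ioo
    · intro s hs
      rcases le_or_gt s b with h | h
      · exact Or.inl ⟨hs.1, h⟩
      · exact Or.inr ⟨h, hs.2⟩
  have hI2val : (∫ s in Ioo (0:ℝ) 1, ge s) = a/c + 2*Real.log c - Real.log (1-b) := by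
    rw [← integral_Ioc_eq_integral_Ioo, ← intervalIntegral.integral_of_le zero_le_one]
    have int1 : IntervalIntegrable ge volume 0 a :=
      (hcontge.mono (by rw [uIcc_of_le ha]; exact Icc_subset_Icc le_rfl hab)).intervalIntegrable
    have int2 : IntervalIntegrable ge volume a b :=
      (hcontge.mono (by rw [uIcc_of_le hab]; exact Icc_subset_Icc ha le_rfl)).intervalIntegrable
    have int3 : IntervalIntegrable ge volume b 1 := by
      rw [intervalIntegrable_iff_integrableOn_Ioc_of_le hb1.le]
      exact (integrableOn_zero).congr_fun
        (fun s hs => (hgezero s (Ioc_subset_Icc_self hs)).symm) measurableSet_Ioc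
    rw [← intervalIntegral.integral_add_adjacent_intervals (b := b) (int1.trans int2) int3,
      ← intervalIntegral.integral_add_adjacent_intervals (a := 0) (b := a) (c := b) int1 int2]
    have p1 : ∫ s in (0:ℝ)..a, ge s = (a/c + Real.log (1-a)) - (0/c + Real.log (1-0)) := by
      apply intervalIntegral.integral_eq_sub_of_hasDerivAt
        (f := fun s => s/c + Real.log (1-s))
      · intro x hx
        rw [uIcc_of_le ha] at hx
        have hx1 : x < 1 := lt_of_le_of_lt hx.2 ha1
        have hlog : HasDerivAt (fun y : ℝ => Real.log (1-y)) ((1-x)⁻¹ * (-1)) x := by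
          exact (Real.hasDerivAt_log (by linarith)).comp x
            (by simpa using (hasDerivAt_id x).const_sub 1)
        have hd := ((hasDerivAt_id x).div_const c).add hlog
        convert hd using 1
        rfl
        rw [hgedef, hΨdef]
        simp only
        rw [max_eq_left (hx.2 : x ≤ a), max_eq_left (hx.2.trans hab)]
        rw [show 2⁻¹ * (1-a) + 2⁻¹ * (1-b) = c by rw [hcdef]; ring]
        field_simp
        ring
      · exact int1
    have p2 : ∫ s in a..b, ge s =
        (-2*Real.log (1 - b/2 - b/2) + Real.log (1-b))
          - (-2*Real.log (1 - a/2 - b/2) + Real.log (1-a)) := by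
      apply intervalIntegral.integral_eq_sub_of_hasDerivAt
        (f := fun s => -2*Real.log (1 - s/2 - b/2) + Real.log (1-s))
      · intro x hx
        rw [uIcc_of_le hab] at hx
        have hx1 : x < 1 := lt_of_le_of_lt hx.2 hb1
        have hw : (0:ℝ) < 1 - x/2 - b/2 := by nlinarith [hx.2]
        have hlin : HasDerivAt (fun y : ℝ => 1 - y/2 - b/2) (-(1/2)) x := by
          have := (((hasDerivAt_id x).div_const 2).const_sub 1).sub_const (b/2)
          simpa using this
        have hlog1 : HasDerivAt (fun y : ℝ => Real.log (1 - y/2 - b/2))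
            ((1 - x/2 - b/2)⁻¹ * (-(1/2))) x :=
          (Real.hasDerivAt_log (ne_of_gt hw)).comp (h₂ := Real.log) x hlin
        have hlog2 : HasDerivAt (fun y : ℝ => Real.log (1-y)) ((1-x)⁻¹ * (-1)) x :=
          (Real.hasDerivAt_log (by linarith)).comp x
            (by simpa using (hasDerivAt_id x).const_sub 1)
        have hd := (hlog1.const_mul (-2:ℝ)).add hlog2
        convert hd using 1
        rfl
        rw [hgedef, hΨdef]
        simp only
        rw [max_eq_right (hx.1 : a ≤ x), max_eq_left (hx.2 : x ≤ b)]
        rw [show 2⁻¹ * (1-x) + 2⁻¹ * (1-b) = 1 - x/2 - b/2 by ring, one_div, one_div]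
        ring
      · exact int2
    have p3 : ∫ s in b..(1:ℝ), ge s = 0 := by
      rw [intervalIntegral.integral_congr (g := fun _ => (0:ℝ))
        (fun s hs => by rw [uIcc_of_le hb1.le] at hs; exact hgezero s hs)]
      simp
    rw [p1, p2, p3, sub_zero, Real.log_one, show (1:ℝ) - b/2 - b/2 = 1 - b by ring,
      show (1:ℝ) - a/2 - b/2 = c by rw [hcdef]; ring]
    ring
  have hI2nn : 0 ≤ ∫ s in Ioo (0:ℝ) 1, ge s :=
    setIntegral_nonneg measurableSet_Ioo hgenn
  have e2 : (∫⁻ s in Ioo (0:ℝ) 1, ENNReal.ofReal (1 / phi (nu a b) s - 1/(1-s)))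
      = ENNReal.ofReal (a/c + 2*Real.log c - Real.log (1-b)) := by
    rw [setLIntegral_congr_fun_ae measurableSet_Ioo
      (ae_of_all _ (fun s hs => by rw [hphiEq s (Ioo_subset_Icc_self hs)]))]
    rw [← ofReal_integral_eq_lintegral_ofReal hgeint
      ((ae_restrict_iff' measurableSet_Ioo).2 (ae_of_all _ hgenn))]
    rw [hI2val]
  -- third term
  have e3 : phi (nu a b) 0 = c := by
    rw [hphiEq 0 (left_mem_Icc.2 zero_le_one), hΨdef]
    simp only
    rw [max_eq_left ha, max_eq_left hb0, hcdef]
    ring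
  -- assembly
  rw [CS, e1, e2, e3]
  rw [EReal.coe_ennreal_ofReal, max_eq_left (by rw [← hI2val]; exact hI2nn)]
  rw [← EReal.coe_add, ← EReal.coe_add, ← EReal.coe_mul]
  congr 1
  rw [Phi, hcdef]
  ring


lemma decr {f g : ℝ → ℝ} {δ : ℝ} (hδ : 0 < δ)
    (hf : ∀ t ∈ Icc 0 δ, HasDerivAt f (g t) t) (hg : ∀ t ∈ Ioo 0 δ, g t < 0) :
    f δ < f 0 := by
  have hanti : StrictAntiOn f (Icc 0 δ) := by
    apply strictAntiOn_of_deriv_neg (convex_Icc 0 δ)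
      (fun t ht => (hf t ht).continuousAt.continuousWithinAt)
    intro t ht
    rw [interior_Icc] at ht
    rw [(hf t (Ioo_subset_Icc_self ht)).deriv]
    exact hg t ht
  exact hanti (left_mem_Icc.2 hδ.le) (right_mem_Icc.2 hδ.le) hδ

lemma exists_delta {P : ℝ → Prop} (hP : ∀ᶠ t in 𝓝 (0:ℝ), P t) :
    ∃ δ > (0:ℝ), ∀ t ∈ Icc (0:ℝ) δ, P t := by
  rw [Metric.eventually_nhds_iff] at hP
  obtain ⟨ε, hε, hb⟩ := hP
  refine ⟨ε/2, by linarith, fun t ht => hb ?_⟩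
  rw [Real.dist_eq, sub_zero, abs_of_nonneg ht.1]
  linarith [ht.2]

lemma iter2 (γ : ℕ → ℝ) {R : ℝ}
    (hD1 : ∀ t ∈ Ioo (-R) R, HasDerivAt (xi γ) (xi1 γ t) t)
    (hD2 : ∀ t ∈ Ioo (-R) R, HasDerivAt (xi1 γ) (xi2 γ t) t)
    {s : ℝ} (hs : s ∈ Ioo (-R) R) :
    iteratedDeriv 2 (xi γ) s = xi2 γ s := by
  have h2 : iteratedDeriv 2 (xi γ) = deriv (deriv (xi γ)) := by
    rw [iteratedDeriv_succ, iteratedDeriv_one]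
  rw [h2]
  have hev : deriv (xi γ) =ᶠ[𝓝 s] xi1 γ :=
    (isOpen_Ioo.eventually_mem hs).mono (fun y hy => (hD1 y hy).deriv)
  rw [hev.deriv_eq]
  exact (hD2 s hs).deriv

set_option maxHeartbeats 2000000 in
/-- **Replica symmetric fixed point relations.** If the minimizer of `P` is a
Dirac mass `δ_q` with `q ∈ [0,1)`, then `q = (ξ'(q) + h²)(1-q)²` and
`ξ''(q)(1-q)² ≤ 1`. -/
theorem stmt_16 (γ : ℕ → ℝ) (h : ℝ) (hγ : ModelCoeffs γ) (hh : 0 ≤ h)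
    (q : ℝ) (hq : q ∈ Ico (0:ℝ) 1) (hmin : Minimizes γ h (Measure.dirac q)) :
    q = (deriv (xi γ) q + h ^ 2) * (1 - q) ^ 2 ∧
      iteratedDeriv 2 (xi γ) q * (1 - q) ^ 2 ≤ 1 := by
  obtain ⟨R, hR1, hD1, hD2, hC2⟩ := xi_smooth γ hγ
  obtain ⟨hq0, hq1⟩ := hq
  have hsub : Icc (0:ℝ) 1 ⊆ Ioo (-R) R := fun s hs =>
    ⟨by nlinarith [hs.1, hs.2], by nlinarith [hs.1, hs.2]⟩
  have hmin' : ∀ a b : ℝ, 0 ≤ a → a ≤ b → b < 1 → Phi γ h q q ≤ Phi γ h a b := by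
    intro a b ha hab hb1
    have h1 := hmin.2 (nu a b) (probOn01_nu a b ha (hab.trans hb1.le) (ha.trans hab) hb1.le)
    rw [dirac_eq_nu q, CS_nu γ h hγ q q hq0 le_rfl hq1, CS_nu γ h hγ a b ha hab hb1,
      EReal.coe_le_coe_iff] at h1
    linarith
  have hqmem : q ∈ Ioo (-R) R := hsub ⟨hq0, hq1.le⟩
  have hderq : deriv (xi γ) q = xi1 γ q := (hD1 q hqmem).deriv
  have hne1q : (1:ℝ) - q ≠ 0 := by linarith
  -- clean diagonal function
  set Fc : ℝ → ℝ := fun r => -(xi γ r) + r/(1-r) + Real.log (1-r) + h^2*(1-r) with hFcdef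
  have hFeq : ∀ r : ℝ, Phi γ h r r = Fc r := by
    intro r
    rw [Phi, hFcdef, show 1-(r+r)/2 = 1-r by ring]
    ring
  have hDFc : ∀ r ∈ Ico (0:ℝ) 1, HasDerivAt Fc
      (-(xi1 γ r) + (1/(1-r)^2 - 1/(1-r)) - h^2) r := by
    intro r hr
    have hrne : (1:ℝ) - r ≠ 0 := by have := hr.2; intro hcon; linarith [sub_eq_zero.1 hcon]
    have t1 : HasDerivAt (fun y : ℝ => -(xi γ y)) (-(xi1 γ r)) r :=
      (hD1 r (hsub ⟨hr.1, hr.2.le⟩)).neg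
    have tlin : HasDerivAt (fun y : ℝ => 1 - y) (-1 : ℝ) r := by
      simpa using (hasDerivAt_id r).const_sub 1
    have t2 : HasDerivAt (fun y : ℝ => y/(1-y))
        ((1 * (1-r) - r * (-1)) / (1-r)^2) r :=
      (hasDerivAt_id r).div tlin hrne
    have t3 : HasDerivAt (fun y : ℝ => Real.log (1-y)) ((1-r)⁻¹ * (-1)) r :=
      (Real.hasDerivAt_log hrne).comp r tlin
    have t4 : HasDerivAt (fun y : ℝ => h^2*(1-y)) (h^2 * (-1)) r := tlin.const_mul _
    have hd := ((t1.add t2).add t3).add t4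
    convert hd using 1
    any_goals with_reducible_and_instances rfl
    field_simp
    ring
  have cond1 : q = (deriv (xi γ) q + h ^ 2) * (1 - q) ^ 2 := by
    rcases eq_or_lt_of_le hq0 with hq0' | hqpos
    · -- q = 0 : show h = 0
      have hFmin : ∀ r ∈ Ico (0:ℝ) 1, Fc q ≤ Fc r := by
        intro r hr
        rw [← hFeq, ← hFeq]
        exact hmin' r r hr.1 le_rfl hr.2
      have hzero : h = 0 := by
        by_contra hne0
        have hsq : 0 < h^2 := by positivity
        set δ : ℝ := min (h^2/8) 2⁻¹ with hδdef
        have hδ0 : 0 < δ := by apply lt_min (by positivity) (by norm_num)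
        have hδh : δ ≤ h^2/8 := min_le_left _ _
        have hδ2 : δ ≤ 2⁻¹ := min_le_right _ _
        have hdecr : Fc δ < Fc 0 := by
          apply decr hδ0 (g := fun t => -(xi1 γ t) + (1/(1-t)^2 - 1/(1-t)) - h^2)
          · intro t ht
            exact hDFc t ⟨ht.1, by nlinarith [ht.2]⟩
          · intro t ht
            have ht2 : t ≤ 2⁻¹ := le_trans ht.2.le hδ2
            have hth : t ≤ h^2/8 := le_trans ht.2.le hδh
            have h1t : (0:ℝ) < 1 - t := by linarith
            have he : 1/(1-t)^2 - 1/(1-t) = t/(1-t)^2 := by field_simp; ring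
            have hb : t/(1-t)^2 ≤ 4*t := by
              rw [div_le_iff₀ (by positivity)]
              have h14 : (1:ℝ)/4 ≤ (1-t)^2 := by nlinarith
              nlinarith [mul_le_mul_of_nonneg_left h14 ht.1.le]
            have hx := xi1_nonneg hγ.1 ht.1.le (t := t)
            rw [he]
            nlinarith
        have hle := hFmin δ ⟨hδ0.le, by nlinarith⟩
        rw [← hq0'] at hle
        linarith
      rw [hderq, hzero, ← hq0', xi1_zero hγ.2.2.1]
      norm_num
    · -- q interior
      have hloc : IsLocalMin Fc q := by
        have hnb : Ioo (0:ℝ) 1 ∈ 𝓝 q := isOpen_Ioo.mem_nhds ⟨hqpos, hq1⟩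
        filter_upwards [hnb] with x hx
        rw [← hFeq, ← hFeq]
        exact hmin' x x hx.1.le le_rfl hx.2
      have h0 : -(xi1 γ q) + (1/(1-q)^2 - 1/(1-q)) - h^2 = 0 := by
        rw [← (hDFc q ⟨hq0, hq1⟩).deriv]
        exact hloc.deriv_eq_zero
      rw [hderq]
      have : xi1 γ q + h^2 = 1/(1-q)^2 - 1/(1-q) := by linarith
      rw [this]
      field_simp
      ring
  refine ⟨cond1, ?_⟩
  have hIter2 : iteratedDeriv 2 (xi γ) q = xi2 γ q := iter2 γ hD1 hD2 hqmem
  rw [hIter2]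
  by_contra hcon
  push_neg at hcon
  rcases eq_or_lt_of_le hq0 with hq0' | hqpos
  · -- q = 0 case
    subst hq0'
    have hh0 : h = 0 := by
      rw [hderq, xi1_zero hγ.2.2.1] at cond1
      have : h^2 = 0 := by nlinarith [cond1]
      exact pow_eq_zero_iff two_ne_zero |>.1 this
    norm_num at hcon
    set Kc : ℝ → ℝ := fun t => -(xi γ t)/2 + 2*Real.log (1-t/2) - Real.log (1-t) with hKcdef
    set K1 : ℝ → ℝ := fun t => -(xi1 γ t)/2 - (1-t/2)⁻¹ + (1-t)⁻¹ with hK1def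
    set K2 : ℝ → ℝ := fun t => -(xi2 γ t)/2 - ((1-t/2)^2)⁻¹/2 + ((1-t)^2)⁻¹ with hK2def
    have hKeq : ∀ t : ℝ, Phi γ h 0 t = Kc t := by
      intro t
      rw [Phi, hh0, xi_zero hγ.2.1, hKcdef, show 1-(0+t)/2 = 1-t/2 by ring]
      ring
    have hK20 : K2 0 < 0 := by
      rw [hK2def]
      norm_num
      nlinarith [hcon]
    have hK2cont : ContinuousAt K2 0 := by
      have h0mem : (0:ℝ) ∈ Ioo (-R) R := hsub ⟨le_rfl, zero_le_one⟩
      have c1 : ContinuousAt (fun t : ℝ => xi2 γ t) 0 := hC2 0 h0mem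
      have c2 : ContinuousAt (fun t : ℝ => ((1-t/2)^2)⁻¹) 0 := by
        apply ContinuousAt.inv₀
          (((continuous_const.sub (continuous_id.div_const 2)).pow 2).continuousAt)
        norm_num
      have c3 : ContinuousAt (fun t : ℝ => ((1-t)^2)⁻¹) 0 := by
        apply ContinuousAt.inv₀ (((continuous_const.sub continuous_id).pow 2).continuousAt)
        norm_num
      exact ((c1.neg.div_const 2).sub (c2.div_const 2)).add c3
    obtain ⟨δ, hδ0, hδP⟩ := exists_delta (P := fun t => K2 t < 0 ∧ t < 2⁻¹)
      ((Filter.Tendsto.eventually_lt_const hK20 hK2cont).and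
        (eventually_lt_nhds (by norm_num : (0:ℝ) < 2⁻¹)))
    have hmem : ∀ t ∈ Icc (0:ℝ) δ, t ∈ Ioo (-R) R := by
      intro t ht
      have := (hδP t ht).2
      exact hsub ⟨ht.1, by linarith⟩
    have hDK : ∀ t ∈ Icc (0:ℝ) δ, HasDerivAt Kc (K1 t) t := by
      intro t ht
      have ht2 := (hδP t ht).2
      have hne2 : (1:ℝ) - t/2 ≠ 0 := by intro hc; nlinarith [sub_eq_zero.1 hc]
      have hne3 : (1:ℝ) - t ≠ 0 := by intro hc; nlinarith [sub_eq_zero.1 hc]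
      have hlin4 : HasDerivAt (fun y : ℝ => 1 - y/2) (-(1/2) : ℝ) t := by
        simpa using ((hasDerivAt_id t).div_const 2).const_sub 1
      have hlin5 : HasDerivAt (fun y : ℝ => 1 - y) (-1 : ℝ) t := by
        simpa using (hasDerivAt_id t).const_sub 1
      have a1 := hD1 t (hmem t ht)
      have a2 : HasDerivAt (fun y : ℝ => Real.log (1-y/2)) ((1-t/2)⁻¹ * (-(1/2))) t :=
        (Real.hasDerivAt_log hne2).comp (h₂ := Real.log) t hlin4
      have a3 : HasDerivAt (fun y : ℝ => Real.log (1-y)) ((1-t)⁻¹ * (-1)) t :=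
        (Real.hasDerivAt_log hne3).comp t hlin5
      have hd := ((a1.neg.div_const 2).add (a2.const_mul 2)).sub a3
      convert hd using 1
      any_goals with_reducible_and_instances rfl
      rw [hK1def]
      ring
    have hDK1 : ∀ t ∈ Icc (0:ℝ) δ, HasDerivAt K1 (K2 t) t := by
      intro t ht
      have ht2 := (hδP t ht).2
      have hne2 : (1:ℝ) - t/2 ≠ 0 := by intro hc; nlinarith [sub_eq_zero.1 hc]
      have hne3 : (1:ℝ) - t ≠ 0 := by intro hc; nlinarith [sub_eq_zero.1 hc]
      have hlin4 : HasDerivAt (fun y : ℝ => 1 - y/2) (-(1/2) : ℝ) t := by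
        simpa using ((hasDerivAt_id t).div_const 2).const_sub 1
      have hlin5 : HasDerivAt (fun y : ℝ => 1 - y) (-1 : ℝ) t := by
        simpa using (hasDerivAt_id t).const_sub 1
      have b1 := hD2 t (hmem t ht)
      have b2 : HasDerivAt (fun y : ℝ => (1-y/2)⁻¹) (-(-(1/2))/(1-t/2)^2) t :=
        hlin4.inv hne2
      have b3 : HasDerivAt (fun y : ℝ => (1-y)⁻¹) (-(-1)/(1-t)^2) t := hlin5.inv hne3
      have hd := ((b1.neg.div_const 2).sub b2).add b3
      convert hd using 1
      any_goals with_reducible_and_instances rfl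
      rw [hK2def]
      ring
    have hK10 : K1 0 = 0 := by
      rw [hK1def]
      norm_num [xi1_zero hγ.2.2.1]
    have hK1neg : ∀ t ∈ Ioo (0:ℝ) δ, K1 t < 0 := by
      intro t ht
      have hlt := decr ht.1 (fun s hs => hDK1 s ⟨hs.1, hs.2.trans ht.2.le⟩)
        (fun s hs => (hδP s ⟨hs.1.le, hs.2.le.trans ht.2.le⟩).1)
      rw [hK10] at hlt
      exact hlt
    have hfin : Kc δ < Kc 0 := decr hδ0 hDK hK1neg
    have hp := hmin' 0 δ le_rfl hδ0.le (by linarith [(hδP δ (right_mem_Icc.2 hδ0.le)).2])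
    rw [hKeq δ, hKeq 0] at hp
    linarith
  · -- q > 0 case
    set Hc : ℝ → ℝ := fun t => -(xi γ (q-t))/2 - xi γ (q+t)/2 + (q-t)/(1-q)
      + 2*Real.log (1-q) - Real.log (1-q-t) + h^2*(1-q) with hHcdef
    set H1 : ℝ → ℝ := fun t => xi1 γ (q-t)/2 - xi1 γ (q+t)/2 - 1/(1-q) + (1-q-t)⁻¹ with hH1def
    set H2 : ℝ → ℝ := fun t => -(xi2 γ (q-t))/2 - xi2 γ (q+t)/2 + ((1-q-t)^2)⁻¹ with hH2def
    have hHeq : ∀ t : ℝ, Phi γ h (q-t) (q+t) = Hc t := by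
      intro t
      rw [Phi, hHcdef, show 1-((q-t)+(q+t))/2 = 1-q by ring, show 1-(q+t) = 1-q-t by ring]
    have hH20 : H2 0 < 0 := by
      rw [hH2def]
      simp only [sub_zero, add_zero]
      have hinv : ((1-q)^2)⁻¹ < xi2 γ q := by
        rw [← one_div]
        exact (div_lt_iff₀ (by positivity)).2 (by linarith [hcon])
      linarith
    have hH2cont : ContinuousAt H2 0 := by
      have c1 : ContinuousAt (fun t : ℝ => xi2 γ (q - t)) 0 := by
        apply ContinuousAt.comp (g := xi2 γ)
        · simpa using hC2 q hqmem
        · exact (continuous_const.sub continuous_id).continuousAt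
      have c2 : ContinuousAt (fun t : ℝ => xi2 γ (q + t)) 0 := by
        apply ContinuousAt.comp (g := xi2 γ)
        · simpa using hC2 q hqmem
        · exact (continuous_const.add continuous_id).continuousAt
      have c3 : ContinuousAt (fun t : ℝ => ((1-q-t)^2)⁻¹) 0 := by
        apply ContinuousAt.inv₀
          (((continuous_const.sub continuous_id).pow 2).continuousAt)
        simpa using pow_ne_zero 2 hne1q
      exact ((c1.neg.div_const 2).sub (c2.div_const 2)).add c3
    obtain ⟨δ, hδ0, hδP⟩ := exists_delta (P := fun t => (H2 t < 0 ∧ t < q) ∧ t < 1 - q)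
      (((Filter.Tendsto.eventually_lt_const hH20 hH2cont).and
        (eventually_lt_nhds hqpos)).and (eventually_lt_nhds (by linarith : (0:ℝ) < 1 - q)))
    have hmem1 : ∀ t ∈ Icc (0:ℝ) δ, q - t ∈ Ioo (-R) R := by
      intro t ht
      have := (hδP t ht).1.2
      exact hsub ⟨by linarith, by linarith [ht.1]⟩
    have hmem2 : ∀ t ∈ Icc (0:ℝ) δ, q + t ∈ Ioo (-R) R := by
      intro t ht
      have := (hδP t ht).2
      exact hsub ⟨by linarith [ht.1], by linarith⟩
    have hDH : ∀ t ∈ Icc (0:ℝ) δ, HasDerivAt Hc (H1 t) t := by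
      intro t ht
      have ht1q := (hδP t ht).2
      have hne : (1:ℝ) - q - t ≠ 0 := by intro hc; nlinarith [sub_eq_zero.1 hc]
      have hlin1 : HasDerivAt (fun y : ℝ => q - y) (-1 : ℝ) t := by
        simpa using (hasDerivAt_id t).const_sub q
      have hlin2 : HasDerivAt (fun y : ℝ => q + y) (1 : ℝ) t := by
        simpa using (hasDerivAt_id t).const_add q
      have hlin3 : HasDerivAt (fun y : ℝ => 1 - q - y) (-1 : ℝ) t := by
        simpa using (hasDerivAt_id t).const_sub (1-q)
      have a1 : HasDerivAt (fun y : ℝ => xi γ (q-y)) (xi1 γ (q-t) * (-1)) t :=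
        (hD1 _ (hmem1 t ht)).comp t hlin1
      have a2 : HasDerivAt (fun y : ℝ => xi γ (q+y)) (xi1 γ (q+t) * 1) t :=
        (hD1 _ (hmem2 t ht)).comp t hlin2
      have a3 : HasDerivAt (fun y : ℝ => (q-y)/(1-q)) ((-1)/(1-q)) t := hlin1.div_const _
      have a4 : HasDerivAt (fun y : ℝ => Real.log (1-q-y)) ((1-q-t)⁻¹ * (-1)) t :=
        (Real.hasDerivAt_log hne).comp t hlin3
      have hd := (((((a1.neg.div_const 2).sub (a2.div_const 2)).add a3).add_const
        (2*Real.log (1-q))).sub a4).add_const (h^2*(1-q))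
      convert hd using 1
      any_goals with_reducible_and_instances rfl
      rw [hH1def]
      ring
    have hDH1 : ∀ t ∈ Icc (0:ℝ) δ, HasDerivAt H1 (H2 t) t := by
      intro t ht
      have ht1q := (hδP t ht).2
      have hne : (1:ℝ) - q - t ≠ 0 := by intro hc; nlinarith [sub_eq_zero.1 hc]
      have hlin1 : HasDerivAt (fun y : ℝ => q - y) (-1 : ℝ) t := by
        simpa using (hasDerivAt_id t).const_sub q
      have hlin2 : HasDerivAt (fun y : ℝ => q + y) (1 : ℝ) t := by
        simpa using (hasDerivAt_id t).const_add q
      have hlin3 : HasDerivAt (fun y : ℝ => 1 - q - y) (-1 : ℝ) t := by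
        simpa using (hasDerivAt_id t).const_sub (1-q)
      have b1 : HasDerivAt (fun y : ℝ => xi1 γ (q-y)) (xi2 γ (q-t) * (-1)) t :=
        (hD2 _ (hmem1 t ht)).comp t hlin1
      have b2 : HasDerivAt (fun y : ℝ => xi1 γ (q+y)) (xi2 γ (q+t) * 1) t :=
        (hD2 _ (hmem2 t ht)).comp t hlin2
      have b3 : HasDerivAt (fun y : ℝ => (1-q-y)⁻¹) (-(-1)/(1-q-t)^2) t := hlin3.inv hne
      have hd := (((b1.div_const 2).sub (b2.div_const 2)).sub_const (1/(1-q))).add b3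
      convert hd using 1
      any_goals with_reducible_and_instances rfl
      rw [hH2def]
      ring
    have hH10 : H1 0 = 0 := by
      rw [hH1def]
      norm_num
    have hH1neg : ∀ t ∈ Ioo (0:ℝ) δ, H1 t < 0 := by
      intro t ht
      have hlt := decr ht.1 (fun s hs => hDH1 s ⟨hs.1, hs.2.trans ht.2.le⟩)
        (fun s hs => (hδP s ⟨hs.1.le, hs.2.le.trans ht.2.le⟩).1.1)
      rw [hH10] at hlt
      exact hlt
    have hfin : Hc δ < Hc 0 := decr hδ0 hDH hH1neg
    have hδq := (hδP δ (right_mem_Icc.2 hδ0.le)).1.2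
    have hδ1q := (hδP δ (right_mem_Icc.2 hδ0.le)).2
    have hp := hmin' (q-δ) (q+δ) (by linarith) (by linarith) (by linarith)
    rw [hHeq δ] at hp
    have h00 := hHeq 0
    rw [sub_zero, add_zero] at h00
    rw [h00] at hp
    linarith
end
end

section
/- Suppose γ₂ = 0 (equivalently ξ''(0) = 0), and let k = min{p ≥ 2 : γ_p > 0}, so k ≥ 3. Then the function s(t) = 3(ξ'''(t))² − 2ξ''(t)ξ''''(t) satisfies lim_{t→0⁺} s(t)/t^{2k−6} = γ_k² k³ (k−1)² (k−2) > 0. In particular there exists δ > 0 such that s(t) > 0, and hence 𝔡(t) > 0, for every t ∈ (0,δ). -/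
open MeasureTheory Set Filter
open scoped ENNReal NNReal Topology

noncomputable section

/-- `s(t) = 3(ξ''')² - 2 ξ'' ξ''''`, which has the same sign as `𝔡` on `(0,1)`. -/
def sgnfun (γ : ℕ → ℝ) (t : ℝ) : ℝ :=
  3 * (iteratedDeriv 3 (xi γ) t) ^ 2
    - 2 * iteratedDeriv 2 (xi γ) t * iteratedDeriv 4 (xi γ) t

section AuxPowerSeries


/-- coefficientwise derivative of a power series -/
def Dcoe (c : ℕ → ℝ) : ℕ → ℝ := fun p => ((p : ℝ) + 1) * c (p + 1)

def Sble (c : ℕ → ℝ) (r : ℝ) : Prop := Summable fun p => |c p| * r ^ p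

lemma sble_mono {c : ℕ → ℝ} {r R : ℝ} (h : Sble c R) (hr : 0 ≤ r) (hrR : r ≤ R) :
    Sble c r := by
  refine h.of_nonneg_of_le (fun p => by positivity) fun p => ?_
  exact mul_le_mul_of_nonneg_left (pow_le_pow_left₀ hr hrR p) (abs_nonneg _)

set_option maxHeartbeats 1000000 in
lemma sble_D {c : ℕ → ℝ} {r R : ℝ} (h : Sble c R) (hr : 0 < r) (hrR : r < R) :
    Sble (Dcoe c) r := by
  have hR : 0 < R := hr.trans hrR
  have hq : |r / R| < 1 := by
    rw [abs_of_pos (div_pos hr hR)]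
    exact (div_lt_one hR).2 hrR
  have hs : Summable (fun p : ℕ => ((p : ℝ) + 1) * (r / R) ^ p) := by
    have h1 := summable_pow_mul_geometric_of_norm_lt_one (R := ℝ) 1 hq
    have h2 : Summable (fun p : ℕ => (r / R) ^ p) :=
      summable_geometric_of_norm_lt_one (by rwa [Real.norm_eq_abs])
    simpa [add_mul, pow_one] using h1.add h2
  set C := ∑' p : ℕ, ((p : ℝ) + 1) * (r / R) ^ p with hC
  have hCb : ∀ p : ℕ, ((p : ℝ) + 1) * (r / R) ^ p ≤ C :=
    fun p => Summable.le_tsum hs p fun j _ => by positivity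
  have hsh : Summable fun p => |c (p + 1)| * R ^ (p + 1) :=
    (summable_nat_add_iff 1).2 h
  refine (hsh.mul_left (C / R)).of_nonneg_of_le (fun p => by positivity) fun p => ?_
  have hb : ((p : ℝ) + 1) * (r / R) ^ p ≤ C := hCb p
  have : |Dcoe c p| * r ^ p = (((p:ℝ) + 1) * (r / R) ^ p) * (|c (p + 1)| * R ^ p) := by
    simp only [Dcoe, abs_mul, abs_of_nonneg (by positivity : (0:ℝ) ≤ (p:ℝ) + 1), div_pow]
    field_simp
  rw [this, pow_succ]
  calc ((p:ℝ) + 1) * (r / R) ^ p * (|c (p + 1)| * R ^ p)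
      ≤ C * (|c (p + 1)| * R ^ p) := by
        apply mul_le_mul_of_nonneg_right hb (by positivity)
    _ = C / R * (|c (p + 1)| * (R ^ p * R)) := by field_simp

lemma summable_terms {c : ℕ → ℝ} {r y : ℝ} (h : Sble c r) (hy : |y| ≤ r) :
    Summable fun p => c p * y ^ p := by
  refine Summable.of_norm_bounded h fun p => ?_
  rw [norm_mul, norm_pow, Real.norm_eq_abs, Real.norm_eq_abs]
  exact mul_le_mul_of_nonneg_left (pow_le_pow_left₀ (abs_nonneg _) hy p) (abs_nonneg _)

lemma hasDerivAt_xi {c : ℕ → ℝ} {r R y : ℝ} (h : Sble c R) (hr : 0 < r) (hrR : r < R)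
    (hy : |y| < r) : HasDerivAt (xi c) (xi (Dcoe c) y) y := by
  have hD : Sble (Dcoe c) r := sble_D h hr hrR
  set u : ℕ → ℝ := fun p => |c p| * ((p : ℝ) * r ^ (p - 1)) with hu
  have hus : Summable u := by
    rw [← summable_nat_add_iff 1]
    refine hD.congr fun p => ?_
    simp only [hu, Dcoe, abs_mul, Nat.add_sub_cancel]
    rw [abs_of_nonneg (by positivity : (0:ℝ) ≤ (p:ℝ) + 1)]
    push_cast
    ring
  have hball : y ∈ Metric.ball (0:ℝ) r := by simpa [Real.dist_eq] using hy
  have hg : ∀ (p : ℕ) (z : ℝ), z ∈ Metric.ball (0:ℝ) r →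
      HasDerivAt (fun w => c p * w ^ p) (c p * ((p : ℝ) * z ^ (p - 1))) z :=
    fun p z _ => (hasDerivAt_pow p z).const_mul _
  have hbound : ∀ (p : ℕ) (z : ℝ), z ∈ Metric.ball (0:ℝ) r →
      ‖c p * ((p : ℝ) * z ^ (p - 1))‖ ≤ u p := by
    intro p z hz
    have hz' : |z| ≤ r := by
      simp only [Metric.mem_ball, Real.dist_eq, sub_zero] at hz; exact hz.le
    rw [Real.norm_eq_abs, abs_mul, abs_mul, abs_pow,
      abs_of_nonneg (Nat.cast_nonneg p : (0:ℝ) ≤ p)]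
    exact mul_le_mul_of_nonneg_left
      (mul_le_mul_of_nonneg_left (pow_le_pow_left₀ (abs_nonneg _) hz' _)
        (Nat.cast_nonneg p)) (abs_nonneg _)
  have h0 : Summable fun p => c p * (0:ℝ) ^ p := by
    apply summable_of_ne_finset_zero (s := {0})
    intro p hp
    simp only [Finset.mem_singleton] at hp
    rw [zero_pow hp, mul_zero]
  have h0b : (0:ℝ) ∈ Metric.ball (0:ℝ) r := by simpa using hr
  have key := hasDerivAt_tsum_of_isPreconnected hus Metric.isOpen_ball
    (convex_ball (0:ℝ) r).isPreconnected hg hbound h0b h0 hball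
  have hsum' : Summable fun p => c p * ((p : ℝ) * y ^ (p - 1)) :=
    Summable.of_norm_bounded hus fun p => hbound p y hball
  have : (∑' p, c p * ((p : ℝ) * y ^ (p - 1))) = xi (Dcoe c) y := by
    rw [Summable.tsum_eq_zero_add hsum']
    simp only [Nat.cast_zero, zero_mul, mul_zero, zero_add, Nat.add_sub_cancel]
    refine tsum_congr fun p => ?_
    simp only [Dcoe]
    push_cast
    ring
  rw [this] at key
  exact key

lemma sble_iter {c : ℕ → ℝ} {R : ℝ} (h : Sble c R) :
    ∀ (n : ℕ) (r : ℝ), 0 < r → r < R → Sble (Dcoe^[n] c) r := by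
  intro n
  induction n with
  | zero => intro r hr hrR; exact sble_mono h hr.le hrR.le
  | succ n ih =>
    intro r hr hrR
    have hmid : r < (r + R) / 2 := by linarith
    have hmid' : (r + R) / 2 < R := by linarith
    have := ih ((r + R) / 2) (by linarith) hmid'
    rw [Function.iterate_succ_apply']
    exact sble_D this hr hmid

lemma iter_eq {c : ℕ → ℝ} {R r : ℝ} (h : Sble c R) (hr : 0 < r) (hrR : r < R) :
    ∀ (n : ℕ) {y : ℝ}, |y| < r → iteratedDeriv n (xi c) y = xi (Dcoe^[n] c) y := by
  intro n
  induction n with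
  | zero => intro y _; simp [iteratedDeriv_zero]
  | succ n ih =>
    intro y hy
    rw [iteratedDeriv_succ]
    have hev : iteratedDeriv n (xi c) =ᶠ[𝓝 y] xi (Dcoe^[n] c) := by
      have hball : Metric.ball (0:ℝ) r ∈ 𝓝 y :=
        Metric.isOpen_ball.mem_nhds (by simpa [Real.dist_eq] using hy)
      filter_upwards [hball] with z hz
      exact ih (by simpa [Real.dist_eq] using hz)
    rw [hev.deriv_eq]
    have hs : Sble (Dcoe^[n] c) ((r + R) / 2) := sble_iter h n _ (by linarith) (by linarith)
    rw [Function.iterate_succ_apply']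
    exact (hasDerivAt_xi hs hr (by linarith) hy).deriv

lemma xi_zero_s17 (c : ℕ → ℝ) : xi c 0 = c 0 := by
  rw [xi, tsum_eq_single 0 (fun p hp => by rw [zero_pow hp, mul_zero])]
  simp

lemma sble_shift {c : ℕ → ℝ} {r : ℝ} (m : ℕ) (h : Sble c r) (hr : 0 < r) :
    Sble (fun q => c (q + m)) r := by
  have hsh : Summable fun q => |c (q + m)| * r ^ (q + m) := (summable_nat_add_iff m).2 h
  refine (hsh.mul_left (r ^ m)⁻¹).congr fun q => ?_
  rw [pow_add]
  field_simp

lemma xi_factor {c : ℕ → ℝ} {y : ℝ} (m : ℕ) (hv : ∀ p < m, c p = 0)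
    (hs : Summable fun p => c p * y ^ p) :
    xi c y = y ^ m * xi (fun q => c (q + m)) y := by
  rw [xi, xi, ← tsum_mul_left]
  have hinj : Function.Injective (fun q : ℕ => q + m) := add_left_injective m
  rw [← Function.Injective.tsum_eq hinj (f := fun p => c p * y ^ p) ?_]
  · refine tsum_congr fun q => ?_
    rw [pow_add]
    ring
  · intro p hp
    rcases le_or_gt m p with h' | h'
    · exact Set.mem_range.2 ⟨p - m, by omega⟩
    · exact absurd (by simp [hv p h']) hp

def Cc2 (γ : ℕ → ℝ) : ℕ → ℝ := Dcoe (Dcoe γ)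
def Cc3 (γ : ℕ → ℝ) : ℕ → ℝ := Dcoe (Cc2 γ)
def Cc4 (γ : ℕ → ℝ) : ℕ → ℝ := Dcoe (Cc3 γ)

lemma Dcoe_iter2 (γ : ℕ → ℝ) : Dcoe^[2] γ = Cc2 γ := rfl
lemma Dcoe_iter3 (γ : ℕ → ℝ) : Dcoe^[3] γ = Cc3 γ := rfl
lemma Dcoe_iter4 (γ : ℕ → ℝ) : Dcoe^[4] γ = Cc4 γ := rfl

lemma Cc2_apply (γ : ℕ → ℝ) (p : ℕ) :
    Cc2 γ p = ((p:ℝ)+1) * ((p:ℝ)+2) * γ (p+2) := by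
  simp only [Cc2, Dcoe]
  push_cast
  ring_nf
lemma Cc3_apply (γ : ℕ → ℝ) (p : ℕ) :
    Cc3 γ p = ((p:ℝ)+1) * ((p:ℝ)+2) * ((p:ℝ)+3) * γ (p+3) := by
  simp only [Cc3, Dcoe, Cc2_apply, show ∀ p:ℕ, p+1+2 = p+3 from fun p => rfl]
  push_cast
  ring
lemma Cc4_apply (γ : ℕ → ℝ) (p : ℕ) :
    Cc4 γ p = ((p:ℝ)+1) * ((p:ℝ)+2) * ((p:ℝ)+3) * ((p:ℝ)+4) * γ (p+4) := by
  simp only [Cc4, Dcoe, Cc3_apply, show ∀ p:ℕ, p+1+3 = p+4 from fun p => rfl]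
  push_cast
  ring

end AuxPowerSeries

/-- If `γ₂ = 0` and `k = min{p ≥ 2 : γ_p > 0}`, then `k ≥ 3`,
`s(t)/t^{2k-6} → γ_k² k³ (k-1)² (k-2) > 0` as `t → 0⁺`, and hence `s > 0` and
`𝔡 > 0` on some interval `(0,δ)`. -/
theorem stmt_17 (γ : ℕ → ℝ) (hγ : ModelCoeffs γ) (h2 : γ 2 = 0)
    (k : ℕ) (hk : IsLeast {p | 0 < γ p} k) :
    3 ≤ k ∧
    Filter.Tendsto (fun t => sgnfun γ t / t ^ (2 * k - 6))
      (nhdsWithin 0 (Ioi (0:ℝ)))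
      (nhds ((γ k) ^ 2 * (k : ℝ) ^ 3 * ((k : ℝ) - 1) ^ 2 * ((k : ℝ) - 2))) ∧
    0 < (γ k) ^ 2 * (k : ℝ) ^ 3 * ((k : ℝ) - 1) ^ 2 * ((k : ℝ) - 2) ∧
    ∃ δ > (0:ℝ), δ ≤ 1 ∧ ∀ t ∈ Ioo (0:ℝ) δ, 0 < sgnfun γ t ∧ 0 < frakd γ t := by
  obtain ⟨hnn, h0, h1, -, ε, hε, hsum⟩ := hγ
  have hγk : 0 < γ k := hk.1
  have hlb : ∀ p, p < k → γ p = 0 := by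
    intro p hp
    by_contra hc
    exact absurd (hk.2 (lt_of_le_of_ne (hnn p) (Ne.symm hc))) (by omega)
  have hk3 : 3 ≤ k := by
    by_contra hc
    push_neg at hc
    interval_cases k <;> simp_all
  have hkR : (3:ℝ) ≤ (k:ℝ) := by exact_mod_cast hk3
  have hra0 : (0:ℝ) < 1 + ε/4 := by linarith
  -- summability
  have hSγ : Sble γ (1 + ε) := by
    show Summable fun p => |γ p| * (1 + ε) ^ p
    exact hsum.congr fun p => by rw [abs_of_nonneg (hnn p)]
  have hS2 : Sble (Cc2 γ) (1 + ε/2) := by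
    have := sble_iter hSγ 2 (1 + ε/2) (by linarith) (by linarith)
    rwa [Dcoe_iter2] at this
  have hS3 : Sble (Cc3 γ) (1 + ε/2) := by
    have := sble_iter hSγ 3 (1 + ε/2) (by linarith) (by linarith)
    rwa [Dcoe_iter3] at this
  have hS4 : Sble (Cc4 γ) (1 + ε/2) := by
    have := sble_iter hSγ 4 (1 + ε/2) (by linarith) (by linarith)
    rwa [Dcoe_iter4] at this
  -- iterated derivative identities
  have hI2 : ∀ y : ℝ, |y| < 1 + ε/4 → iteratedDeriv 2 (xi γ) y = xi (Cc2 γ) y := fun y hy => by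
    rw [iter_eq hSγ hra0 (by linarith) 2 hy, Dcoe_iter2]
  have hI3 : ∀ y : ℝ, |y| < 1 + ε/4 → iteratedDeriv 3 (xi γ) y = xi (Cc3 γ) y := fun y hy => by
    rw [iter_eq hSγ hra0 (by linarith) 3 hy, Dcoe_iter3]
  have hI4 : ∀ y : ℝ, |y| < 1 + ε/4 → iteratedDeriv 4 (xi γ) y = xi (Cc4 γ) y := fun y hy => by
    rw [iter_eq hSγ hra0 (by linarith) 4 hy, Dcoe_iter4]
  -- nonnegativity / vanishing / values of coefficients
  have hnn2 : ∀ p, 0 ≤ Cc2 γ p := fun p => by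
    rw [Cc2_apply]
    exact mul_nonneg (mul_nonneg (by positivity) (by positivity)) (hnn _)
  have hv2 : ∀ p < k - 2, Cc2 γ p = 0 := fun p hp => by
    rw [Cc2_apply, hlb (p+2) (by omega), mul_zero]
  have hv3 : ∀ p < k - 3, Cc3 γ p = 0 := fun p hp => by
    rw [Cc3_apply, hlb (p+3) (by omega), mul_zero]
  have hv4 : ∀ p < k - 4, Cc4 γ p = 0 := fun p hp => by
    rw [Cc4_apply, hlb (p+4) (by omega), mul_zero]
  have hA0 : Cc2 γ (k-2) = (k:ℝ) * ((k:ℝ) - 1) * γ k := by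
    rw [Cc2_apply, show k - 2 + 2 = k from by omega, Nat.cast_sub (by omega : 2 ≤ k)]
    push_cast
    ring
  have hB0 : Cc3 γ (k-3) = (k:ℝ) * ((k:ℝ)-1) * ((k:ℝ)-2) * γ k := by
    rw [Cc3_apply, show k - 3 + 3 = k from by omega, Nat.cast_sub (by omega : 3 ≤ k)]
    push_cast
    ring
  -- shifted (factored) functions
  set A : ℝ → ℝ := xi (fun q => Cc2 γ (q + (k - 2))) with hAdef
  set B : ℝ → ℝ := xi (fun q => Cc3 γ (q + (k - 3))) with hBdef
  set Cf : ℝ → ℝ := xi (fun q => Cc4 γ (q + (k - 4))) with hCdef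
  have hSA : Sble (fun q => Cc2 γ (q + (k-2))) (1 + ε/2) := sble_shift _ hS2 (by linarith)
  have hSB : Sble (fun q => Cc3 γ (q + (k-3))) (1 + ε/2) := sble_shift _ hS3 (by linarith)
  have hSC : Sble (fun q => Cc4 γ (q + (k-4))) (1 + ε/2) := sble_shift _ hS4 (by linarith)
  have habs0 : |(0:ℝ)| < 1 + ε/4 := by simpa using hra0
  have contA : ContinuousAt A 0 :=
    (hasDerivAt_xi hSA hra0 (by linarith) habs0).continuousAt
  have contB : ContinuousAt B 0 :=
    (hasDerivAt_xi hSB hra0 (by linarith) habs0).continuousAt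
  have contC : ContinuousAt Cf 0 :=
    (hasDerivAt_xi hSC hra0 (by linarith) habs0).continuousAt
  have hA0v : A 0 = Cc2 γ (k-2) := by rw [hAdef, xi_zero_s17]; norm_num
  have hB0v : B 0 = Cc3 γ (k-3) := by rw [hBdef, xi_zero_s17]; norm_num
  have hC0v : Cf 0 = Cc4 γ (k-4) := by rw [hCdef, xi_zero_s17]; norm_num
  have hfac2 : ∀ t : ℝ, |t| ≤ 1 → xi (Cc2 γ) t = t ^ (k-2) * A t := fun t ht =>
    xi_factor (k-2) hv2 (summable_terms (sble_mono hS2 zero_le_one (by linarith)) ht)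
  have hfac3 : ∀ t : ℝ, |t| ≤ 1 → xi (Cc3 γ) t = t ^ (k-3) * B t := fun t ht =>
    xi_factor (k-3) hv3 (summable_terms (sble_mono hS3 zero_le_one (by linarith)) ht)
  have hfac4 : ∀ t : ℝ, |t| ≤ 1 → xi (Cc4 γ) t = t ^ (k-4) * Cf t := fun t ht =>
    xi_factor (k-4) hv4 (summable_terms (sble_mono hS4 zero_le_one (by linarith)) ht)
  -- positivity of ξ''
  have hA0pos : 0 < Cc2 γ (k-2) := by
    rw [hA0]
    exact mul_pos (mul_pos (by linarith) (by linarith)) hγk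
  have hfpos : ∀ t : ℝ, 0 < t → t < 1 + ε/2 → 0 < xi (Cc2 γ) t := by
    intro t ht ht2
    have hsumt : Summable fun p => Cc2 γ p * t ^ p :=
      summable_terms hS2 (by rw [abs_of_pos ht]; linarith)
    have hle : Cc2 γ (k-2) * t ^ (k-2) ≤ ∑' p, Cc2 γ p * t ^ p :=
      Summable.le_tsum hsumt (k-2) fun j _ => mul_nonneg (hnn2 j) (pow_nonneg ht.le j)
    have h' : 0 < Cc2 γ (k-2) * t ^ (k-2) := mul_pos hA0pos (pow_pos ht _)
    show (0:ℝ) < ∑' p, Cc2 γ p * t ^ p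
    linarith
  have hL : 0 < γ k ^2 * (k:ℝ)^3 * ((k:ℝ)-1)^2 * ((k:ℝ)-2) := by
    apply mul_pos (mul_pos (mul_pos (pow_pos hγk 2) (pow_pos (by linarith) 3))
      (pow_pos (by linarith) 2)) (by linarith)
  have hIoo : Ioo (0:ℝ) 1 ∈ 𝓝[>] (0:ℝ) :=
    Ioo_mem_nhdsGT_of_mem (by constructor <;> norm_num)
  -- the limit
  have hT : Tendsto (fun t => sgnfun γ t / t ^ (2 * k - 6)) (𝓝[>] (0:ℝ))
      (𝓝 (γ k ^ 2 * (k:ℝ)^3 * ((k:ℝ)-1)^2 * ((k:ℝ)-2))) := by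
    rcases eq_or_lt_of_le hk3 with hk3e | hk4
    · -- k = 3
      have hk3e' : k = 3 := hk3e.symm
      subst hk3e'
      have cont3 : ContinuousAt (xi (Cc3 γ)) 0 :=
        (hasDerivAt_xi hS3 hra0 (by linarith) habs0).continuousAt
      have cont4 : ContinuousAt (xi (Cc4 γ)) 0 :=
        (hasDerivAt_xi hS4 hra0 (by linarith) habs0).continuousAt
      have hconts : ContinuousAt
          (fun t => 3 * (xi (Cc3 γ) t)^2 - 2 * (t * A t) * (xi (Cc4 γ) t)) 0 := by
        exact ((cont3.pow 2).const_mul 3).sub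
          (((continuousAt_id.mul contA).const_mul 2).mul cont4)
      have hval : 3 * (xi (Cc3 γ) 0)^2 - 2 * ((0:ℝ) * A 0) * (xi (Cc4 γ) 0)
          = γ 3 ^ 2 * ((3:ℕ):ℝ)^3 * (((3:ℕ):ℝ)-1)^2 * (((3:ℕ):ℝ)-2) := by
        rw [xi_zero_s17, Cc3_apply]
        norm_num
        ring
      have base : Tendsto (fun t => 3 * (xi (Cc3 γ) t)^2 - 2 * (t * A t) * (xi (Cc4 γ) t))
          (𝓝[>] (0:ℝ))
          (𝓝 (γ 3 ^ 2 * ((3:ℕ):ℝ)^3 * (((3:ℕ):ℝ)-1)^2 * (((3:ℕ):ℝ)-2))) := by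
        have := hconts.tendsto.mono_left (nhdsWithin_le_nhds (s := Ioi (0:ℝ)))
        rwa [hval] at this
      refine base.congr' ?_
      filter_upwards [hIoo] with t htI
      have ht1 : |t| ≤ 1 := by rw [abs_of_pos htI.1]; exact htI.2.le
      have htr : |t| < 1 + ε/4 := lt_of_le_of_lt ht1 (by linarith)
      rw [show 2*3-6 = 0 from rfl, pow_zero, div_one, sgnfun,
        hI2 t htr, hI3 t htr, hI4 t htr, hfac2 t ht1,
        show (3:ℕ) - 2 = 1 from rfl, pow_one]
    · -- k ≥ 4
      have hk4' : 4 ≤ k := hk4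
      have hC0 : Cc4 γ (k-4) = (k:ℝ)*((k:ℝ)-1)*((k:ℝ)-2)*((k:ℝ)-3)*γ k := by
        rw [Cc4_apply, show k - 4 + 4 = k from by omega, Nat.cast_sub (by omega : 4 ≤ k)]
        push_cast
        ring
      have hconts : ContinuousAt (fun t => 3 * (B t)^2 - 2 * (A t * Cf t)) 0 :=
        ((contB.pow 2).const_mul 3).sub ((contA.mul contC).const_mul 2)
      have hval : 3 * (B 0)^2 - 2 * (A 0 * Cf 0)
          = γ k ^ 2 * (k:ℝ)^3 * ((k:ℝ)-1)^2 * ((k:ℝ)-2) := by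
        rw [hA0v, hB0v, hC0v, hA0, hB0, hC0]
        ring
      have base : Tendsto (fun t => 3 * (B t)^2 - 2 * (A t * Cf t)) (𝓝[>] (0:ℝ))
          (𝓝 (γ k ^ 2 * (k:ℝ)^3 * ((k:ℝ)-1)^2 * ((k:ℝ)-2))) := by
        have := hconts.tendsto.mono_left (nhdsWithin_le_nhds (s := Ioi (0:ℝ)))
        rwa [hval] at this
      refine base.congr' ?_
      filter_upwards [hIoo] with t htI
      have ht1 : |t| ≤ 1 := by rw [abs_of_pos htI.1]; exact htI.2.le
      have htr : |t| < 1 + ε/4 := lt_of_le_of_lt ht1 (by linarith)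
      have e1 : t^(k-3) * t^(k-3) = t^(2*k-6) := by rw [← pow_add]; congr 1; omega
      have e2 : t^(k-2) * t^(k-4) = t^(2*k-6) := by rw [← pow_add]; congr 1; omega
      have key : sgnfun γ t = t^(2*k-6) * (3 * (B t)^2 - 2 * (A t * Cf t)) := by
        rw [sgnfun, hI2 t htr, hI3 t htr, hI4 t htr, hfac2 t ht1, hfac3 t ht1, hfac4 t ht1]
        calc 3 * (t^(k-3) * B t)^2 - 2 * (t^(k-2) * A t) * (t^(k-4) * Cf t)
            = (t^(k-3) * t^(k-3)) * (3 * (B t)^2) - (t^(k-2) * t^(k-4)) * (2 * (A t * Cf t)) := by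
              ring
          _ = t^(2*k-6) * (3 * (B t)^2 - 2 * (A t * Cf t)) := by rw [e1, e2]; ring
      rw [key, mul_div_cancel_left₀ _ (pow_ne_zero _ (ne_of_gt htI.1))]
  -- extract δ
  have hev : ∀ᶠ t in 𝓝[>] (0:ℝ), 0 < sgnfun γ t / t ^ (2*k-6) :=
    hT.eventually (eventually_gt_nhds hL)
  have hev1 : ∀ᶠ t in 𝓝[>] (0:ℝ), t ∈ Ioo (0:ℝ) 1 := by
    filter_upwards [hIoo] with t ht using ht
  obtain ⟨u, hu0, hsub⟩ := mem_nhdsGT_iff_exists_Ioo_subset.1 (hev.and hev1)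
  refine ⟨hk3, hT, hL, min u 1, lt_min hu0 one_pos, min_le_right _ _, ?_⟩
  intro t ht
  have htu : t ∈ Ioo 0 u := ⟨ht.1, lt_of_lt_of_le ht.2 (min_le_left _ _)⟩
  obtain ⟨hrat, htI⟩ := hsub htu
  have hsgn : 0 < sgnfun γ t := by
    have hp : (0:ℝ) < t ^ (2*k-6) := pow_pos ht.1 _
    have hmul := mul_pos hrat hp
    rwa [div_mul_cancel₀ _ (ne_of_gt hp)] at hmul
  refine ⟨hsgn, ?_⟩
  -- frakd positivity
  have htV : t ∈ Ioo (0:ℝ) (1 + ε/4) := ⟨htI.1, lt_trans htI.2 (by linarith)⟩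
  have hmemr : ∀ z : ℝ, z ∈ Ioo (0:ℝ) (1 + ε/4) → |z| < 1 + ε/4 := fun z hz => by
    rw [abs_of_pos hz.1]; exact hz.2
  have hfpos' : ∀ z : ℝ, z ∈ Ioo (0:ℝ) (1 + ε/4) → 0 < xi (Cc2 γ) z := fun z hz =>
    hfpos z hz.1 (by linarith [hz.2])
  have hfd : ∀ z : ℝ, z ∈ Ioo (0:ℝ) (1 + ε/4) → HasDerivAt (xi (Cc2 γ)) (xi (Cc3 γ) z) z := by
    intro z hz
    have := hasDerivAt_xi hS2 hra0 (by linarith) (hmemr z hz)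
    rwa [show Dcoe (Cc2 γ) = Cc3 γ from rfl] at this
  have hqpos : ∀ z : ℝ, z ∈ Ioo (0:ℝ) (1 + ε/4) → 0 < Real.sqrt (xi (Cc2 γ) z) := fun z hz =>
    Real.sqrt_pos.2 (hfpos' z hz)
  have hsq : ∀ z : ℝ, z ∈ Ioo (0:ℝ) (1 + ε/4) →
      HasDerivAt (fun v => Real.sqrt (xi (Cc2 γ) v))
        (1 / (2 * Real.sqrt (xi (Cc2 γ) z)) * xi (Cc3 γ) z) z := fun z hz =>
    (Real.hasDerivAt_sqrt (ne_of_gt (hfpos' z hz))).comp z (hfd z hz)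
  set G : ℝ → ℝ :=
    fun z => -(xi (Cc3 γ) z) / (2 * xi (Cc2 γ) z * Real.sqrt (xi (Cc2 γ) z)) with hGdef
  have hg1 : ∀ z : ℝ, z ∈ Ioo (0:ℝ) (1 + ε/4) →
      HasDerivAt (fun v => 1 / Real.sqrt (xi (Cc2 γ) v)) (G z) z := by
    intro z hz
    have h := (hsq z hz).inv (ne_of_gt (hqpos z hz))
    have hGz : G z = -(1 / (2 * Real.sqrt (xi (Cc2 γ) z)) * xi (Cc3 γ) z)
        / (Real.sqrt (xi (Cc2 γ) z)) ^ 2 := by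
      have hqp := hqpos z hz
      have hfp := hfpos' z hz
      show -(xi (Cc3 γ) z) / (2 * xi (Cc2 γ) z * Real.sqrt (xi (Cc2 γ) z)) = _
      generalize hq : Real.sqrt (xi (Cc2 γ) z) = q at hqp ⊢
      have hq2 : q ^ 2 = xi (Cc2 γ) z := by rw [← hq]; exact Real.sq_sqrt hfp.le
      rw [← hq2, div_eq_div_iff
        (ne_of_gt (mul_pos (mul_pos two_pos (pow_pos hqp 2)) hqp))
        (ne_of_gt (pow_pos hqp 2))]
      field_simp
    rw [hGz]
    simp only [one_div] at h ⊢
    exact h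
  have hderivg : ∀ z : ℝ, z ∈ Ioo (0:ℝ) (1 + ε/4) →
      deriv (fun v => 1 / Real.sqrt (iteratedDeriv 2 (xi γ) v)) z = G z := by
    intro z hz
    have hevq : (fun v => 1 / Real.sqrt (iteratedDeriv 2 (xi γ) v)) =ᶠ[𝓝 z]
        (fun v => 1 / Real.sqrt (xi (Cc2 γ) v)) := by
      filter_upwards [isOpen_Ioo.mem_nhds hz] with w hw
      rw [hI2 w (hmemr w hw)]
    rw [hevq.deriv_eq]
    exact (hg1 z hz).deriv
  have hnum : HasDerivAt (fun z => -(xi (Cc3 γ) z)) (-(xi (Cc4 γ) t)) t := by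
    have := hasDerivAt_xi hS3 hra0 (by linarith) (hmemr t htV)
    rw [show Dcoe (Cc3 γ) = Cc4 γ from rfl] at this
    exact this.neg
  have hden : HasDerivAt (fun z => 2 * xi (Cc2 γ) z * Real.sqrt (xi (Cc2 γ) z))
      (2 * xi (Cc3 γ) t * Real.sqrt (xi (Cc2 γ) t)
        + 2 * xi (Cc2 γ) t * (1 / (2 * Real.sqrt (xi (Cc2 γ) t)) * xi (Cc3 γ) t)) t := by
    exact ((hfd t htV).const_mul 2).mul (hsq t htV)
  have hdenne : 2 * xi (Cc2 γ) t * Real.sqrt (xi (Cc2 γ) t) ≠ 0 :=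
    ne_of_gt (mul_pos (mul_pos two_pos (hfpos' t htV)) (hqpos t htV))
  have hGder : HasDerivAt G
      ((3 * (xi (Cc3 γ) t)^2 - 2 * xi (Cc2 γ) t * xi (Cc4 γ) t)
        * Real.sqrt (xi (Cc2 γ) t) / (4 * (xi (Cc2 γ) t)^3)) t := by
    have h := hnum.div hden hdenne
    refine h.congr_deriv ?_
    symm
    have hqp := hqpos t htV
    have hfp := hfpos' t htV
    generalize hq : Real.sqrt (xi (Cc2 γ) t) = q at hqp ⊢
    have hq2 : q ^ 2 = xi (Cc2 γ) t := by rw [← hq]; exact Real.sq_sqrt hfp.le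
    rw [← hq2, div_eq_div_iff
      (ne_of_gt (mul_pos (by norm_num : (0:ℝ) < 4) (pow_pos (pow_pos hqp 2) 3)))
      (ne_of_gt (pow_pos (mul_pos (mul_pos two_pos (pow_pos hqp 2)) hqp) 2))]
    field_simp
    ring
  have hfrak : frakd γ t = deriv G t := by
    rw [frakd]
    have hev2 : deriv (fun v => 1 / Real.sqrt (iteratedDeriv 2 (xi γ) v)) =ᶠ[𝓝 t] G := by
      filter_upwards [isOpen_Ioo.mem_nhds htV] with z hz
      exact hderivg z hz
    exact hev2.deriv_eq
  have hsgneq : sgnfun γ t = 3 * (xi (Cc3 γ) t)^2 - 2 * xi (Cc2 γ) t * xi (Cc4 γ) t := by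
    rw [sgnfun, hI2 t (hmemr t htV), hI3 t (hmemr t htV), hI4 t (hmemr t htV)]
  rw [hfrak, hGder.deriv, ← hsgneq]
  exact div_pos (mul_pos hsgn (hqpos t htV))
    (by
      have := hfpos' t htV
      positivity)
end
end
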